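/- Value-function version of the inheritance property. Assume: (P(a)) Ṽ is as given (nonempty and closed under pointwise convergence); (B(a)) for every v̄ ∈ Ṽ and every y' ∈ Y, the function (s, a) ↦ h_{y'}(s, a, v̄) belongs to F̃; (B(b)) for every f ∈ F̃, the function s ↦ min_{a ∈ 𝒜 s} f(s, a) belongs to Ṽ. Then the unique bounded fixed point v* of H satisfies v*(·, b) ∈ Ṽ for every b ∈ B. -/

import Mathlib

open Finset

/-- The belief simplex over the modulation space `M`. -/
abbrev Belief (M : Type) [Fintype M] : Type :=
  {b : M → ℝ // (∀ μ, 0 ≤ b μ) ∧ ∑ μ, b μ = 1}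

/-- A finite SEP-POMDP: feasible action sets, cost function, state transition
probabilities, modulation/observation probabilities, and a discount factor. -/
structure SEP (S Y M A : Type) [Fintype S] [Fintype Y] [Fintype M] [Fintype A] where
  act : S → Finset A
  act_ne : ∀ s, (act s).Nonempty
  c : S → Y → A → ℝ
  p : Y → S → A → S → ℝ
  p_nonneg : ∀ y' s a s', 0 ≤ p y' s a s'
  p_sum : ∀ y' s a, ∑ s', p y' s a s' = 1
  Q : M → Y → M → ℝ
  Q_nonneg : ∀ μ y' μ', 0 ≤ Q μ y' μ'
  Q_sum : ∀ μ, ∑ y', ∑ μ', Q μ y' μ' = 1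
  β : ℝ
  β_nonneg : 0 ≤ β
  β_lt_one : β < 1

namespace SEP

variable {S Y M A : Type} [Fintype S] [Fintype Y] [Fintype M] [Fintype A]

/-- `σ(y' | b) = ∑ μ, ∑ μ', b μ * Q μ y' μ'`. -/
def sig (P : SEP S Y M A) (b : Belief M) (y' : Y) : ℝ :=
  ∑ μ, ∑ μ', b.1 μ * P.Q μ y' μ'

/-- The Bayesian belief update `λ(y', b)`. -/
noncomputable def lam (P : SEP S Y M A) (y' : Y) (b : Belief M) : Belief M :=
  if h : 0 < P.sig b y' then
    ⟨fun μ' => (∑ μ, b.1 μ * P.Q μ y' μ') / P.sig b y',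
      fun μ' => div_nonneg (Finset.sum_nonneg fun μ _ =>
        mul_nonneg (b.2.1 μ) (P.Q_nonneg μ y' μ')) h.le,
      by
        rw [← Finset.sum_div, Finset.sum_comm]
        exact div_self (ne_of_gt h)⟩
  else b

/-- `h_{y'}(s, a, v̄) = c s y' a + β * ∑ s', p y' s a s' * v̄ s'`. -/
def hy (P : SEP S Y M A) (y' : Y) (s : S) (a : A) (vb : S → ℝ) : ℝ :=
  P.c s y' a + P.β * ∑ s', P.p y' s a s' * vb s'

/-- The Bellman operator `H` of the SEP-POMDP. -/
noncomputable def H (P : SEP S Y M A) (v : S → Belief M → ℝ) (s : S) (b : Belief M) : ℝ :=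
  (P.act s).inf' (P.act_ne s) fun a =>
    ∑ y', P.sig b y' * P.hy y' s a fun s' => v s' (P.lam y' b)

/-- Boundedness of a function `v : S × B → ℝ`. -/
def Bdd (v : S → Belief M → ℝ) : Prop :=
  ∃ C, ∀ s b, |v s b| ≤ C

end SEP

/-!
Value iteration started from a belief-independent `w₀ ∈ Ṽ` stays in `Ṽ` slice by slice:
for each belief, a step of `H` forms a nonnegative combination of the functions
`h_{y'}(·, ·, v̄)` (in `F̃` by B(a) and the cone property) and minimises it over actions
(back in `Ṽ` by B(b)). Since `H` is a `β`-contraction in the sup norm, the iterates converge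
pointwise to `v*`, and `Ṽ` is closed under pointwise convergence.
-/

open Filter Topology

lemma sum_mul_mem_of_cone {ι X : Type*} {F : Set (X → ℝ)}
    (hadd : ∀ f ∈ F, ∀ g ∈ F, (fun x => f x + g x) ∈ F)
    (hsmul : ∀ f ∈ F, ∀ t : ℝ, 0 ≤ t → (fun x => t * f x) ∈ F)
    {s : Finset ι} (hs : s.Nonempty) {w : ι → ℝ} (hw : ∀ i ∈ s, 0 ≤ w i)
    {f : ι → X → ℝ} (hf : ∀ i ∈ s, f i ∈ F) :
    (fun x => ∑ i ∈ s, w i * f i x) ∈ F := by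
  rw [← Finset.sum_fn s fun i x => w i * f i x]
  exact Finset.sum_induction_nonempty _ (· ∈ F) (fun f g hf hg => hadd f hf g hg) hs
    fun i hi => hsmul _ (hf i hi) _ (hw i hi)

lemma abs_sum_mul_le_of_sum_eq_one {ι : Type*} {s : Finset ι} {w x : ι → ℝ} {D : ℝ}
    (hw : ∀ i ∈ s, 0 ≤ w i) (hw_sum : ∑ i ∈ s, w i = 1) (hx : ∀ i ∈ s, |x i| ≤ D) :
    |∑ i ∈ s, w i * x i| ≤ D :=
  calc |∑ i ∈ s, w i * x i|
      ≤ ∑ i ∈ s, |w i * x i| := Finset.abs_sum_le_sum_abs _ _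
    _ ≤ ∑ i ∈ s, w i * D := Finset.sum_le_sum fun i hi => by
        rw [abs_mul, abs_of_nonneg (hw i hi)]
        exact mul_le_mul_of_nonneg_left (hx i hi) (hw i hi)
    _ = D := by rw [← Finset.sum_mul, hw_sum, one_mul]

lemma Finset.abs_inf'_sub_inf'_le {ι : Type*} {s : Finset ι} (hs : s.Nonempty) {f g : ι → ℝ}
    {D : ℝ} (h : ∀ i ∈ s, |f i - g i| ≤ D) : |s.inf' hs f - s.inf' hs g| ≤ D := by
  rw [abs_sub_le_iff]
  constructor
  · obtain ⟨i, hi, hgi⟩ := s.exists_mem_eq_inf' hs g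
    have := (abs_sub_le_iff.mp (h i hi)).1
    linarith [s.inf'_le f hi]
  · obtain ⟨i, hi, hfi⟩ := s.exists_mem_eq_inf' hs f
    have := (abs_sub_le_iff.mp (h i hi)).2
    linarith [s.inf'_le g hi]

namespace SEP

variable {S Y M A : Type} [Fintype S] [Fintype Y] [Fintype M] [Fintype A] (P : SEP S Y M A)

lemma sig_nonneg (b : Belief M) (y' : Y) : 0 ≤ P.sig b y' :=
  Finset.sum_nonneg fun μ _ => Finset.sum_nonneg fun μ' _ =>
    mul_nonneg (b.2.1 μ) (P.Q_nonneg μ y' μ')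

lemma sum_sig (b : Belief M) : ∑ y', P.sig b y' = 1 := by
  unfold sig
  rw [Finset.sum_comm]
  calc ∑ μ, ∑ y', ∑ μ', b.1 μ * P.Q μ y' μ'
      = ∑ μ, b.1 μ * ∑ y', ∑ μ', P.Q μ y' μ' := by simp only [Finset.mul_sum]
    _ = 1 := by simpa only [P.Q_sum, mul_one] using b.2.2

lemma abs_hy_sub_hy_le (y' : Y) (s : S) (a : A) {v w : S → ℝ} {D : ℝ}
    (h : ∀ s', |v s' - w s'| ≤ D) : |P.hy y' s a v - P.hy y' s a w| ≤ P.β * D := by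
  have hdiff : P.hy y' s a v - P.hy y' s a w = P.β * ∑ s', P.p y' s a s' * (v s' - w s') := by
    simp only [hy, mul_sub, Finset.sum_sub_distrib]
    ring
  rw [hdiff, abs_mul, abs_of_nonneg P.β_nonneg]
  exact mul_le_mul_of_nonneg_left
    (abs_sum_mul_le_of_sum_eq_one (fun s' _ => P.p_nonneg y' s a s') (P.p_sum y' s a)
      fun s' _ => h s')
    P.β_nonneg

lemma abs_H_sub_H_le {v w : S → Belief M → ℝ} {D : ℝ} (h : ∀ s b, |v s b - w s b| ≤ D)
    (s : S) (b : Belief M) : |P.H v s b - P.H w s b| ≤ P.β * D := by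
  refine Finset.abs_inf'_sub_inf'_le _ fun a _ => ?_
  rw [← Finset.sum_sub_distrib]
  simp only [← mul_sub]
  exact abs_sum_mul_le_of_sum_eq_one (fun y' _ => P.sig_nonneg b y') (P.sum_sig b)
    fun y' _ => P.abs_hy_sub_hy_le y' s a fun s' => h s' _

lemma abs_H_iterate_sub_le {v vstar : S → Belief M → ℝ}
    (hfix : ∀ s b, vstar s b = P.H vstar s b) {C : ℝ} (hC : ∀ s b, |v s b - vstar s b| ≤ C)
    (n : ℕ) (s : S) (b : Belief M) :
    |P.H^[n] v s b - vstar s b| ≤ P.β ^ n * C := by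
  induction n generalizing s b with
  | zero => simpa using hC s b
  | succ n ih =>
    rw [Function.iterate_succ_apply', hfix s b, pow_succ', mul_assoc]
    exact P.abs_H_sub_H_le ih s b

lemma tendsto_H_iterate {v vstar : S → Belief M → ℝ} (hv : Bdd v) (hvstar : Bdd vstar)
    (hfix : ∀ s b, vstar s b = P.H vstar s b) (b : Belief M) :
    Tendsto (fun n s => P.H^[n] v s b) atTop (𝓝 fun s => vstar s b) := by
  obtain ⟨Cv, hCv⟩ := hv
  obtain ⟨Cstar, hCstar⟩ := hvstar
  have hC : ∀ s b, |v s b - vstar s b| ≤ Cv + Cstar := fun s b =>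
    (abs_sub _ _).trans (add_le_add (hCv s b) (hCstar s b))
  rw [tendsto_pi_nhds]
  intro s
  rw [← tendsto_sub_nhds_zero_iff]
  refine squeeze_zero_norm (fun n => P.abs_H_iterate_sub_le hfix hC n s b) ?_
  simpa using (tendsto_pow_atTop_nhds_zero_of_lt_one P.β_nonneg P.β_lt_one).mul_const _

section Inheritance

variable [Nonempty Y] {Vt : Set (S → ℝ)} {Ft : Set (S × A → ℝ)}
  (hFadd : ∀ f ∈ Ft, ∀ g ∈ Ft, (fun x => f x + g x) ∈ Ft)
  (hFsmul : ∀ f ∈ Ft, ∀ t : ℝ, 0 ≤ t → (fun x => t * f x) ∈ Ft)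
  (hBa : ∀ vb ∈ Vt, ∀ y' : Y, (fun x : S × A => P.hy y' x.1 x.2 vb) ∈ Ft)
  (hBb : ∀ f ∈ Ft, (fun s => (P.act s).inf' (P.act_ne s) fun a => f (s, a)) ∈ Vt)
include hFadd hFsmul hBa hBb

lemma H_mem {v : S → Belief M → ℝ} (hv : ∀ b, (fun s => v s b) ∈ Vt) (b : Belief M) :
    (fun s => P.H v s b) ∈ Vt :=
  hBb _ <| sum_mul_mem_of_cone
    (f := fun y' (x : S × A) => P.hy y' x.1 x.2 fun s' => v s' (P.lam y' b))
    hFadd hFsmul univ_nonempty (fun y' _ => P.sig_nonneg b y') fun y' _ => hBa _ (hv _) y'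

lemma H_iterate_mem {v : S → Belief M → ℝ} (hv : ∀ b, (fun s => v s b) ∈ Vt) (n : ℕ)
    (b : Belief M) : (fun s => P.H^[n] v s b) ∈ Vt := by
  induction n generalizing b with
  | zero => exact hv b
  | succ n ih =>
    simp only [Function.iterate_succ_apply']
    exact P.H_mem hFadd hFsmul hBa hBb ih b

end Inheritance

end SEP

theorem sep_pomdp_inheritance_value_general {S Y M A : Type} [Fintype S] [Fintype Y] [Fintype M] [Fintype A]
    [Nonempty Y]
    (P : SEP S Y M A)
    (Vt : Set (S → ℝ)) (hVne : Vt.Nonempty) (hVclosed : IsClosed Vt)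
    -- F̃ is a convex cone of functions on S × A
    (Ft : Set (S × A → ℝ))
    (hFadd : ∀ f ∈ Ft, ∀ g ∈ Ft, (fun x => f x + g x) ∈ Ft)
    (hFsmul : ∀ f ∈ Ft, ∀ t : ℝ, 0 ≤ t → (fun x => t * f x) ∈ Ft)
    -- B(a)
    (hBa : ∀ vb ∈ Vt, ∀ y' : Y, (fun x : S × A => P.hy y' x.1 x.2 vb) ∈ Ft)
    -- B(b)
    (hBb : ∀ f ∈ Ft,
      (fun s => (P.act s).inf' (P.act_ne s) fun a => f (s, a)) ∈ Vt)
    -- the unique bounded fixed point of H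
    (vstar : S → Belief M → ℝ) (hbdd : SEP.Bdd vstar)
    (hfix : ∀ s b, vstar s b = P.H vstar s b) :
    ∀ b, (fun s => vstar s b) ∈ Vt := by
  intro b
  obtain ⟨w₀, hw₀⟩ := hVne
  have hw₀_bdd : SEP.Bdd fun (s : S) (_ : Belief M) => w₀ s := by
    obtain ⟨C, hC⟩ := (Set.finite_range fun s => |w₀ s|).bddAbove
    exact ⟨C, fun s _ => hC ⟨s, rfl⟩⟩
  exact hVclosed.mem_of_tendsto (P.tendsto_H_iterate hw₀_bdd hbdd hfix b)
    (Eventually.of_forall fun n => P.H_iterate_mem hFadd hFsmul hBa hBb (fun _ => hw₀) n b)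

/-- **Value-function version of the inheritance property.** Under P(a), B(a)
and B(b) (with `Ft` a convex cone of structured functions on `S × A`), the
unique bounded fixed point `vstar` of `H` satisfies `vstar (·, b) ∈ Vt`
for every belief `b`. -/
theorem sep_pomdp_inheritance_value {S Y M A : Type} [Fintype S] [Fintype Y] [Fintype M] [Fintype A]
    [Nonempty S] [Nonempty Y] [Nonempty M] [Nonempty A]
    (P : SEP S Y M A)
    (Vt : Set (S → ℝ)) (hVne : Vt.Nonempty) (hVclosed : IsClosed Vt)
    -- F̃ is a convex cone of functions on S × A
    (Ft : Set (S × A → ℝ))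
    (hFadd : ∀ f ∈ Ft, ∀ g ∈ Ft, (fun x => f x + g x) ∈ Ft)
    (hFsmul : ∀ f ∈ Ft, ∀ t : ℝ, 0 ≤ t → (fun x => t * f x) ∈ Ft)
    -- B(a)
    (hBa : ∀ vb ∈ Vt, ∀ y' : Y, (fun x : S × A => P.hy y' x.1 x.2 vb) ∈ Ft)
    -- B(b)
    (hBb : ∀ f ∈ Ft,
      (fun s => (P.act s).inf' (P.act_ne s) fun a => f (s, a)) ∈ Vt)
    -- the unique bounded fixed point of H
    (vstar : S → Belief M → ℝ) (hbdd : SEP.Bdd vstar)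
    (hfix : ∀ s b, vstar s b = P.H vstar s b) :
    ∀ b, (fun s => vstar s b) ∈ Vt :=
  sep_pomdp_inheritance_value_general P Vt hVne hVclosed Ft hFadd hFsmul hBa hBb vstar hbdd hfix
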